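/- For any d×d positive semidefinite complex Hermitian matrix J, a d×d positive definite real matrix G, and any real symmetric d×d matrix V with V ≥ J (Loewner order over ℂ), one has Tr(GV) ≥ Tr(G·Re J) + Tr|√G (Im J) √G|. -/

import Mathlib

open Matrix
open scoped ComplexOrder
noncomputable section

/-- Entrywise real part, as a complex matrix. -/
def reM {m n : Type*} (J : Matrix m n ℂ) : Matrix m n ℂ := fun i j => ((J i j).re : ℂ)

/-- Entrywise imaginary part, as a complex matrix. -/
def imM {m n : Type*} (J : Matrix m n ℂ) : Matrix m n ℂ := fun i j => ((J i j).im : ℂ)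

/-- A complex matrix has all real entries. -/
def IsRealMat {m n : Type*} (A : Matrix m n ℂ) : Prop := ∀ i j, (A i j).im = 0

/-- The square root of a positive semidefinite matrix, as defined in Mathlib (Dec 2024). -/
def Matrix.PosSemidef.sqrt {n 𝕜 : Type*} [Fintype n] [DecidableEq n] [RCLike 𝕜]
    {A : Matrix n n 𝕜} (hA : A.PosSemidef) : Matrix n n 𝕜 :=
  hA.1.eigenvectorUnitary.1 * diagonal ((↑) ∘ (√·) ∘ hA.1.eigenvalues) *
    (star hA.1.eigenvectorUnitary : Matrix n n 𝕜)

/-- Matrix absolute value `|A| = √(Aᴴ A)`. -/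
def matAbs {n : Type*} [Fintype n] [DecidableEq n] (A : Matrix n n ℂ) : Matrix n n ℂ :=
  (Matrix.posSemidef_conjTranspose_mul_self A).sqrt

/-!
Put `S = √G`, which is real because `G` is. The positive semidefinite matrix `S (V - J) S` equals
`A - H` with `A = S (V - Re J) S` and `H = i S (Im J) S`, where `S`, `V`, `Re J`, `Im J` are real;
so its entrywise conjugate `A + H` is positive semidefinite as well. In an eigenbasis of the
Hermitian matrix `H`, the diagonal entries of `A ∓ H` are nonnegative, i.e. every eigenvalue
satisfies `|λᵢ| ≤ Aᵢᵢ`. Summing,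
`Tr |S (Im J) S| = Tr |H| = ∑ |λᵢ| ≤ Tr A = Tr (G V) - Tr (G Re J)`.
-/

open scoped MatrixOrder

namespace Matrix

section
variable {n 𝕜 : Type*} [RCLike 𝕜]

lemma PosSemidef.map_conj {A : Matrix n n 𝕜} (hA : A.PosSemidef) :
    (A.map (starRingEnd 𝕜)).PosSemidef := by
  have hA' : A.map (starRingEnd 𝕜) = Aᵀ := by
    ext i j
    exact congrFun₂ hA.1 j i
  exact hA' ▸ hA.transpose

variable [DecidableEq n]

lemma abs_le_re_apply_of_posSemidef {A : Matrix n n 𝕜} {d : n → ℝ}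
    (h₁ : (A - diagonal (RCLike.ofReal ∘ d)).PosSemidef)
    (h₂ : (A + diagonal (RCLike.ofReal ∘ d)).PosSemidef) (i : n) :
    |d i| ≤ RCLike.re (A i i) := by
  have hle₁ := (RCLike.nonneg_iff.mp (h₁.diag_nonneg (i := i))).1
  have hle₂ := (RCLike.nonneg_iff.mp (h₂.diag_nonneg (i := i))).1
  simp only [sub_apply, add_apply, diagonal_apply_eq, Function.comp_apply, map_sub, map_add,
    RCLike.ofReal_re, sub_nonneg] at hle₁ hle₂
  exact abs_le.mpr ⟨by linarith, by linarith⟩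

variable [Fintype n]

lemma PosSemidef.sqrt_eq_cfcSqrt {A : Matrix n n 𝕜} (hA : A.PosSemidef) :
    hA.sqrt = CFC.sqrt A := by
  rw [CFC.sqrt_eq_cfc, cfc_nnreal_eq_real _ A hA.nonneg, hA.1.cfc_eq, IsHermitian.cfc,
    Unitary.conjStarAlgAut_apply, PosSemidef.sqrt]
  congr 4
  funext x
  unfold Real.sqrt
  rfl

lemma cfcSqrt_map_conj {A : Matrix n n 𝕜} (hA : A.PosSemidef)
    (hA' : A.map (starRingEnd 𝕜) = A) :
    (CFC.sqrt A).map (starRingEnd 𝕜) = CFC.sqrt A := by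
  have hS := (CFC.sqrt_nonneg A).posSemidef.map_conj
  rw [eq_comm, CFC.sqrt_eq_iff _ _ hA.nonneg hS.nonneg, ← Matrix.map_mul,
    CFC.sqrt_mul_sqrt_self A hA.nonneg, hA']

lemma IsHermitian.trace_cfc {A : Matrix n n 𝕜} (hA : A.IsHermitian) (f : ℝ → ℝ) :
    (cfc f A).trace = ∑ i, (f (hA.eigenvalues i) : 𝕜) := by
  rw [hA.cfc_eq, IsHermitian.cfc, Unitary.conjStarAlgAut_apply, trace_mul_cycle,
    Unitary.coe_star_mul_self, one_mul, trace_diagonal]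
  rfl

lemma re_trace_cfcAbs_le {A H : Matrix n n 𝕜} (h₁ : (A - H).PosSemidef)
    (h₂ : (A + H).PosSemidef) : RCLike.re (CFC.abs H).trace ≤ RCLike.re A.trace := by
  have hH : H.IsHermitian := by
    -- `H = 2⁻¹ • ((A + H) - (A - H))`
    convert (h₂.1.sub h₁.1).smul (k := (2⁻¹ : ℝ)) (IsSelfAdjoint.all _) using 1
    module
  set U : Matrix n n 𝕜 := ↑hH.eigenvectorUnitary
  have hdiag : star U * H * U = diagonal (RCLike.ofReal ∘ hH.eigenvalues) := by
    simpa [Unitary.conjStarAlgAut_star_apply] using hH.conjStarAlgAut_star_eigenvectorUnitary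
  have h₁' : (star U * A * U - diagonal (RCLike.ofReal ∘ hH.eigenvalues)).PosSemidef := by
    rw [← hdiag, ← Matrix.sub_mul, ← Matrix.mul_sub, star_eq_conjTranspose]
    exact h₁.conjTranspose_mul_mul_same U
  have h₂' : (star U * A * U + diagonal (RCLike.ofReal ∘ hH.eigenvalues)).PosSemidef := by
    rw [← hdiag, ← Matrix.add_mul, ← Matrix.mul_add, star_eq_conjTranspose]
    exact h₂.conjTranspose_mul_mul_same U
  have htrace : (star U * A * U).trace = A.trace := by
    rw [trace_mul_cycle, show U * star U = 1 from Unitary.coe_mul_star_self _, one_mul]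
  rw [CFC.abs_eq_cfc_norm H hH.isSelfAdjoint, hH.trace_cfc, ← htrace, trace, map_sum, map_sum]
  refine Finset.sum_le_sum fun i _ => ?_
  rw [RCLike.ofReal_re, Real.norm_eq_abs]
  exact abs_le_re_apply_of_posSemidef h₁' h₂' i

end

end Matrix

lemma matAbs_eq_cfcAbs {n : Type*} [Fintype n] [DecidableEq n] (A : Matrix n n ℂ) :
    matAbs A = CFC.abs A := by
  rw [matAbs, PosSemidef.sqrt_eq_cfcSqrt, CFC.abs, star_eq_conjTranspose]

section
variable {m n : Type*}

lemma IsRealMat.map_conj {A : Matrix m n ℂ} (hA : IsRealMat A) :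
    A.map (starRingEnd ℂ) = A := by
  ext i j
  exact Complex.conj_eq_iff_im.mpr (hA i j)

lemma reM_add_I_smul_imM (J : Matrix m n ℂ) : reM J + Complex.I • imM J = J := by
  ext i j
  simp [reM, imM, mul_comm Complex.I, Complex.re_add_im]

lemma map_conj_eq_reM_sub_I_smul_imM (J : Matrix m n ℂ) :
    J.map (starRingEnd ℂ) = reM J - Complex.I • imM J := by
  ext i j
  apply Complex.ext <;> simp [reM, imM]

end

theorem trace_lower_bound_general {d : ℕ} (J G V : Matrix (Fin d) (Fin d) ℂ)
    (hG : G.PosDef) (hGreal : IsRealMat G)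
    (hVreal : IsRealMat V) (hVJ : (V - J).PosSemidef) :
    (Matrix.trace (G * V)).re ≥
      (Matrix.trace (G * reM J)).re +
        (Matrix.trace (matAbs (hG.posSemidef.sqrt * imM J * hG.posSemidef.sqrt))).re := by
  set S := hG.posSemidef.sqrt
  have hS : S = CFC.sqrt G := hG.posSemidef.sqrt_eq_cfcSqrt
  have hSherm : Sᴴ = S := hS ▸ (CFC.sqrt_nonneg G).posSemidef.1
  have hSS : S * S = G := hS ▸ CFC.sqrt_mul_sqrt_self G hG.posSemidef.nonneg
  have hSreal : S.map (starRingEnd ℂ) = S := hS ▸ cfcSqrt_map_conj hG.posSemidef hGreal.map_conj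
  set A := S * (V - reM J) * S
  set H := S * (Complex.I • imM J) * S
  have hAH : A - H = S * (V - J) * S := by
    rw [← reM_add_I_smul_imM J, ← Matrix.sub_mul, ← Matrix.mul_sub, sub_add_eq_sub_sub]
  have h₁ : (A - H).PosSemidef := by
    simpa only [hAH, hSherm] using hVJ.conjTranspose_mul_mul_same S
  have h₂ : (A + H).PosSemidef := by
    have hconj : (A - H).map (starRingEnd ℂ) = A + H := by
      rw [hAH, ← RingHom.mapMatrix_apply, map_mul, map_mul, map_sub]
      simp only [RingHom.mapMatrix_apply, hSreal, hVreal.map_conj, map_conj_eq_reM_sub_I_smul_imM,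
        A, H]
      noncomm_ring
    exact hconj ▸ h₁.map_conj
  have habs : matAbs (S * imM J * S) = CFC.abs H := by
    rw [matAbs_eq_cfcAbs]
    simp only [H, Matrix.mul_smul, Matrix.smul_mul, CFC.abs_smul, Complex.norm_I, one_smul]
  have htrace : A.trace = (G * V).trace - (G * reM J).trace := by
    rw [trace_mul_cycle, hSS, Matrix.mul_sub, trace_sub]
  have hkey := re_trace_cfcAbs_le h₁ h₂
  rw [← habs, htrace, map_sub] at hkey
  simp only [RCLike.re_to_complex] at hkey
  linarith

/-- For a positive semidefinite complex Hermitian `J`, positive definite real `G`, and any real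
symmetric `V` with `V ≥ J` (Loewner order over ℂ):
`Tr(G V) ≥ Tr(G Re J) + Tr|√G (Im J) √G|`. -/
theorem trace_lower_bound {d : ℕ} (J G V : Matrix (Fin d) (Fin d) ℂ)
    (hJ : J.PosSemidef) (hG : G.PosDef) (hGreal : IsRealMat G)
    (hVreal : IsRealMat V) (hVherm : V.IsHermitian) (hVJ : (V - J).PosSemidef) :
    (Matrix.trace (G * V)).re ≥
      (Matrix.trace (G * reM J)).re +
        (Matrix.trace (matAbs (hG.posSemidef.sqrt * imM J * hG.posSemidef.sqrt))).re :=
  trace_lower_bound_general J G V hG hGreal hVreal hVJ
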